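/- Let φ_j, φ be convex functions on ℝ with ∂²φ_j, ∂²φ probability measures, ‖φ_j - φ‖_{L^∞(ℝ)} → 0, and ∂²φ_j ≤ C·φ₀''·dx uniformly in j, where φ₀(x) = log(1+e^x). Then ∫_ℝ φ₀ d(∂²φ_j) → ∫_ℝ φ₀ d(∂²φ). -/

import Mathlib

open MeasureTheory Filter Topology Set Real
open scoped ENNReal

/-!
Write `σ = φ₀'` for the logistic sigmoid. By Tonelli, `∫ φ₀ dm = ∫ σ(s) m(s, ∞) ds` for every
measure `m`, so it suffices to dominate `σ(s) μ_j(s, ∞)` and to prove `μ_j(s, ∞) → ν(s, ∞)` for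
a.e. `s`. The domination `μ_j ≤ C φ₀'' dx` gives `σ(s) μ_j(s, ∞) ≤ C σ(s) (1 - σ(s)) = C φ₀''(s)`,
which is integrable. At every point where `ψ` is differentiable (almost every point, as a convex
function is locally Lipschitz) the right derivatives of the `φ_j` are squeezed between difference
quotients, which converge; hence `μ_j(a, b] → ν(a, b]` for such `a, b`, and as all the measures
have mass one this upgrades to `μ_j(s, ∞) → ν(s, ∞)`.
-/

theorem LocallyLipschitz.ae_differentiableAt {E F : Type*} [NormedAddCommGroup E]
    [NormedSpace ℝ E] [FiniteDimensional ℝ E] [MeasurableSpace E] [BorelSpace E]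
    [NormedAddCommGroup F] [NormedSpace ℝ F] [FiniteDimensional ℝ F]
    {μ : Measure E} [μ.IsAddHaarMeasure] {f : E → F} (hf : LocallyLipschitz f) :
    ∀ᵐ x ∂μ, DifferentiableAt ℝ f x := by
  refine measure_null_of_locally_null _ fun x _ => ?_
  obtain ⟨K, t, ht, hK⟩ := hf x
  obtain ⟨v, hvt, hv, hxv⟩ := mem_nhds_iff.1 ht
  refine ⟨_, inter_mem_nhdsWithin _ (hv.mem_nhds hxv), ?_⟩
  have hdiff : ∀ᵐ y ∂μ, y ∈ v → DifferentiableWithinAt ℝ f v y :=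
    (hK.mono hvt).ae_differentiableWithinAt_of_mem
  refine measure_mono_null ?_ (ae_iff.1 hdiff)
  exact fun y hy h => hy.1 ((h hy.2).differentiableAt (hv.mem_nhds hy.2))

variable {ι : Type*} {l : Filter ι}

theorem ConvexOn.tendsto_rightDeriv_of_tendsto {f : ι → ℝ → ℝ} {g : ℝ → ℝ} {x : ℝ}
    (hf : ∀ i, ConvexOn ℝ univ (f i)) (hfg : ∀ y, Tendsto (fun i => f i y) l (𝓝 (g y)))
    (hg : DifferentiableAt ℝ g x) :
    Tendsto (fun i => derivWithin (f i) (Ioi x) x) l (𝓝 (derivWithin g (Ioi x) x)) := by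
  have hslope : ∀ y, Tendsto (fun i => slope (f i) x y) l (𝓝 (slope g x y)) := fun y => by
    simp only [slope_def_field]
    exact ((hfg y).sub (hfg x)).div_const _
  have hg' := hasDerivAt_iff_tendsto_slope_left_right.1 hg.hasDerivAt
  rw [hg.derivWithin (uniqueDiffWithinAt_Ioi x)]
  refine tendsto_order.2 ⟨fun r hr => ?_, fun r hr => ?_⟩
  · obtain ⟨y, hry, hyx⟩ := ((hg'.1.eventually (lt_mem_nhds hr)).and self_mem_nhdsWithin).exists
    filter_upwards [(hslope y).eventually (lt_mem_nhds hry)] with i hi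
    calc r < slope (f i) x y := hi
      _ = slope (f i) y x := slope_comm _ _ _
      _ ≤ derivWithin (f i) (Iio x) x :=
        (hf i).slope_le_leftDeriv_of_mem_interior (mem_univ y) (by simp) hyx
      _ ≤ derivWithin (f i) (Ioi x) x := (hf i).leftDeriv_le_rightDeriv_of_mem_interior (by simp)
  · obtain ⟨y, hyr, hxy⟩ := ((hg'.2.eventually (gt_mem_nhds hr)).and self_mem_nhdsWithin).exists
    filter_upwards [(hslope y).eventually (gt_mem_nhds hyr)] with i hi
    exact ((hf i).rightDeriv_le_slope_of_mem_interior (by simp) (mem_univ y) hxy).trans_lt hi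

section

variable {α β : Type*} [MeasurableSpace α]

theorem eventually_lt_measure_of_tendsto {μ : ι → Measure α} {ν : Measure α} {L : Filter β}
    {S : β → Set α} {T : Set α} {D : Set β} (hST : ∀ b, S b ⊆ T)
    (hνS : Tendsto (fun b => ν (S b)) L (𝓝 (ν T))) (hD : ∃ᶠ b in L, b ∈ D)
    (hμS : ∀ᶠ b in L, b ∈ D → Tendsto (fun i => μ i (S b)) l (𝓝 (ν (S b))))
    {r : ℝ≥0∞} (hr : r < ν T) : ∀ᶠ i in l, r < μ i T := by
  obtain ⟨b, hbD, hμb, hrb⟩ :=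
    (hD.and_eventually (hμS.and (hνS.eventually (lt_mem_nhds hr)))).exists
  filter_upwards [(hμb hbD).eventually (lt_mem_nhds hrb)] with i hi
  exact hi.trans_le (measure_mono (hST b))

theorem tendsto_measure_of_eventually_lt_of_eventually_lt_compl {μ : ι → Measure α}
    [∀ i, IsProbabilityMeasure (μ i)] {ν : Measure α} [IsProbabilityMeasure ν] {T : Set α}
    (hT : MeasurableSet T) (h : ∀ r < ν T, ∀ᶠ i in l, r < μ i T)
    (hc : ∀ r < ν Tᶜ, ∀ᶠ i in l, r < μ i Tᶜ) : Tendsto (fun i => μ i T) l (𝓝 (ν T)) := by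
  refine tendsto_order.2 ⟨h, fun r hr => ?_⟩
  rcases lt_or_ge 1 r with h1 | h1
  · exact Eventually.of_forall fun i => prob_le_one.trans_lt h1
  have hsub : ∀ {c : ℝ≥0∞}, 1 - r < 1 - c ↔ c < r :=
    (ENNReal.cancel_of_ne ENNReal.one_ne_top).tsub_lt_tsub_iff_left_of_le
      (ENNReal.cancel_of_ne (ne_top_of_le_ne_top ENNReal.one_ne_top h1)) h1
  filter_upwards [hc (1 - r) (by rwa [prob_compl_eq_one_sub hT, hsub])] with i hi
  rwa [prob_compl_eq_one_sub hT, hsub] at hi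

end

theorem frequently_atTop_of_ae {p : ℝ → Prop} (h : ∀ᵐ x, p x) : ∃ᶠ x in atTop, p x := by
  refine frequently_atTop.2 fun a => ?_
  have : (ae (volume.restrict (Ici a))).NeBot := ae_neBot.2 (by simp)
  exact ((ae_restrict_mem measurableSet_Ici).and (ae_restrict_of_ae h)).exists

theorem frequently_atBot_of_ae {p : ℝ → Prop} (h : ∀ᵐ x, p x) : ∃ᶠ x in atBot, p x := by
  refine frequently_atBot.2 fun a => ?_
  have : (ae (volume.restrict (Iic a))).NeBot := ae_neBot.2 (by simp)
  exact ((ae_restrict_mem measurableSet_Iic).and (ae_restrict_of_ae h)).exists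

theorem tendsto_measure_Ioi_of_tendsto_measure_Ioc {μ : ι → Measure ℝ}
    [∀ i, IsProbabilityMeasure (μ i)] {ν : Measure ℝ} [IsProbabilityMeasure ν] {D : Set ℝ}
    (hD_top : ∃ᶠ b in atTop, b ∈ D) (hD_bot : ∃ᶠ a in atBot, a ∈ D)
    (h : ∀ a ∈ D, ∀ b ∈ D, a ≤ b → Tendsto (fun i => μ i (Ioc a b)) l (𝓝 (ν (Ioc a b))))
    {s : ℝ} (hs : s ∈ D) : Tendsto (fun i => μ i (Ioi s)) l (𝓝 (ν (Ioi s))) := by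
  refine tendsto_measure_of_eventually_lt_of_eventually_lt_compl measurableSet_Ioi
    (fun r => eventually_lt_measure_of_tendsto (S := fun b => Ioc s b)
      (fun b => Ioc_subset_Ioi_self) ?_ hD_top ?_)
    (fun r => eventually_lt_measure_of_tendsto (S := fun a => Ioc a s)
      (fun a => by rw [compl_Ioi]; exact Ioc_subset_Iic_self) ?_ hD_bot ?_)
  · rw [← iUnion_Ioc_right]
    exact tendsto_measure_iUnion_atTop fun b c hbc => Ioc_subset_Ioc_right hbc
  · filter_upwards [eventually_ge_atTop s] with b hsb hb using h s hs b hb hsb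
  · simpa only [compl_Ioi] using tendsto_measure_Ioc_atBot ν s
  · filter_upwards [eventually_le_atBot s] with a has ha using h a ha s hs has

theorem lintegral_setLIntegral_Iio (m : Measure ℝ) [SFinite m] {g : ℝ → ℝ≥0∞}
    (hg : Measurable g) : ∫⁻ x, (∫⁻ s in Iio x, g s) ∂m = ∫⁻ s, g s * m (Ioi s) := by
  set G : ℝ × ℝ → ℝ≥0∞ := {p | p.2 < p.1}.indicator (g ∘ Prod.snd)
  have hG : Measurable G :=
    (hg.comp measurable_snd).indicator (measurableSet_lt measurable_snd measurable_fst)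
  calc ∫⁻ x, (∫⁻ s in Iio x, g s) ∂m = ∫⁻ x, ∫⁻ s, G (x, s) ∂volume ∂m := by
        simp_rw [← lintegral_indicator measurableSet_Iio]
        rfl
    _ = ∫⁻ s, ∫⁻ x, G (x, s) ∂m ∂volume := lintegral_lintegral_swap hG.aemeasurable
    _ = ∫⁻ s, ∫⁻ x, (Ioi s).indicator (fun _ => g s) x ∂m ∂volume := rfl
    _ = ∫⁻ s, g s * m (Ioi s) := by simp_rw [lintegral_indicator_const measurableSet_Ioi]

theorem exp_div_one_add_exp (x : ℝ) : exp x / (1 + exp x) = sigmoid x := by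
  rw [sigmoid_def, exp_neg]
  field_simp
  ring

theorem exp_div_one_add_exp_sq (x : ℝ) :
    exp x / (1 + exp x) ^ 2 = sigmoid x * (1 - sigmoid x) := by
  rw [← exp_div_one_add_exp]
  field_simp
  ring

theorem hasDerivAt_log_one_add_exp (x : ℝ) :
    HasDerivAt (fun x => log (1 + exp x)) (sigmoid x) x := by
  simpa only [exp_div_one_add_exp] using ((hasDerivAt_exp x).const_add 1).log (by positivity)

theorem sigmoid_le_exp (x : ℝ) : sigmoid x ≤ exp x := by
  rw [← exp_div_one_add_exp]
  exact div_le_self (exp_pos x).le (by linarith [exp_pos x])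

theorem ofReal_log_one_add_exp (x : ℝ) :
    ENNReal.ofReal (log (1 + exp x)) = ∫⁻ s in Iio x, ENNReal.ofReal (sigmoid s) := by
  have hint : IntegrableOn sigmoid (Iic x) :=
    (integrableOn_exp_Iic x).mono' continuous_sigmoid.aestronglyMeasurable
      (Eventually.of_forall fun s => by
        rw [norm_of_nonneg (sigmoid_nonneg s)]; exact sigmoid_le_exp s)
  have hbot : Tendsto (fun x => log (1 + exp x)) atBot (𝓝 0) := by
    simpa using (tendsto_exp_atBot.const_add 1).log (by norm_num)
  rw [← ofReal_integral_eq_lintegral_ofReal (hint.mono_set Iio_subset_Iic_self)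
    (Eventually.of_forall sigmoid_nonneg), ← integral_Iic_eq_integral_Iio,
    integral_Iic_of_hasDerivAt_of_tendsto' (fun s _ => hasDerivAt_log_one_add_exp s) hint hbot,
    sub_zero]

/-- The logistic distribution `σ'(x) dx`, that is `φ₀''(x) dx`. -/
noncomputable def logisticMeasure : Measure ℝ :=
  volume.withDensity fun x => ENNReal.ofReal (sigmoid x * (1 - sigmoid x))

theorem logisticMeasure_Ioi (b : ℝ) :
    logisticMeasure (Ioi b) = ENNReal.ofReal (1 - sigmoid b) := by
  have hderiv : ∀ x ∈ Ici b, HasDerivAt sigmoid (sigmoid x * (1 - sigmoid x)) x :=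
    fun x _ => hasDerivAt_sigmoid x
  have hnonneg : ∀ x, 0 ≤ sigmoid x * (1 - sigmoid x) :=
    fun x => mul_nonneg (sigmoid_nonneg x) (sub_nonneg.2 (sigmoid_le_one x))
  rw [logisticMeasure, withDensity_apply _ measurableSet_Ioi,
    ← ofReal_integral_eq_lintegral_ofReal
      (integrableOn_Ioi_deriv_of_nonneg' hderiv (fun x _ => hnonneg x) tendsto_sigmoid_atTop)
      (Eventually.of_forall hnonneg),
    integral_Ioi_of_hasDerivAt_of_nonneg' hderiv (fun x _ => hnonneg x) tendsto_sigmoid_atTop]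

instance : IsProbabilityMeasure logisticMeasure := by
  refine ⟨tendsto_nhds_unique (f := fun b => logisticMeasure (Ioi b)) (l := atBot) ?_ ?_⟩
  · simpa only [iUnion_Ioi, Function.comp_def] using
      tendsto_measure_iUnion_atBot (μ := logisticMeasure) fun a b hab => Ioi_subset_Ioi hab
  · simpa only [logisticMeasure_Ioi, sub_zero, ENNReal.ofReal_one] using
      ENNReal.tendsto_ofReal (tendsto_sigmoid_atBot.const_sub 1)

theorem lintegral_ofReal_sigmoid_mul_logisticMeasure_Ioi :
    ∫⁻ s, ENNReal.ofReal (sigmoid s) * logisticMeasure (Ioi s) = 1 := by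
  simp_rw [logisticMeasure_Ioi, ← ENNReal.ofReal_mul (sigmoid_nonneg _)]
  rw [← measure_univ (μ := logisticMeasure), logisticMeasure,
    withDensity_apply _ MeasurableSet.univ, Measure.restrict_univ]

theorem withDensity_ofReal_mul_exp_div_one_add_exp_sq (C : ℝ) :
    volume.withDensity (fun x => ENNReal.ofReal (C * (exp x / (1 + exp x) ^ 2))) =
      ENNReal.ofReal C • logisticMeasure := by
  rw [logisticMeasure, ← withDensity_smul' _ _ ENNReal.ofReal_ne_top]
  congr 1
  funext x
  rw [exp_div_one_add_exp_sq, Pi.smul_apply, smul_eq_mul, ← ENNReal.ofReal_mul']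
  exact mul_nonneg (sigmoid_nonneg x) (sub_nonneg.2 (sigmoid_le_one x))

theorem tendsto_integral_log_one_add_exp {μ : ℕ → Measure ℝ} [∀ j, SFinite (μ j)]
    {ν : Measure ℝ} [SFinite ν] {c : ℝ≥0∞} (hc : c ≠ ⊤)
    (hdom : ∀ j, μ j ≤ c • logisticMeasure)
    (hlim : ∀ᵐ s, Tendsto (fun j => μ j (Ioi s)) atTop (𝓝 (ν (Ioi s)))) :
    Tendsto (fun j => ∫ x, log (1 + exp x) ∂μ j) atTop (𝓝 (∫ x, log (1 + exp x) ∂ν)) := by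
  set F : Measure ℝ → ℝ → ℝ≥0∞ := fun m s => ENNReal.ofReal (sigmoid s) * m (Ioi s)
  have hF : ∀ (m : Measure ℝ) [SFinite m], ∫ x, log (1 + exp x) ∂m = (∫⁻ s, F m s).toReal := by
    intro m _
    have hcont : Continuous fun x => log (1 + exp x) :=
      (continuous_const.add continuous_exp).log fun x => (add_pos one_pos (exp_pos x)).ne'
    rw [integral_eq_lintegral_of_nonneg_ae
      (Eventually.of_forall fun x => log_nonneg (by linarith [exp_pos x]))
      hcont.aestronglyMeasurable]
    simp_rw [ofReal_log_one_add_exp]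
    rw [lintegral_setLIntegral_Iio m (by fun_prop)]
  have hF_meas : ∀ j, Measurable (F (μ j)) := fun j =>
    (by fun_prop : Measurable fun s => ENNReal.ofReal (sigmoid s)).mul
      (Antitone.measurable fun a b hab => measure_mono (Ioi_subset_Ioi hab))
  have hbound : ∀ j, F (μ j) ≤ F (c • logisticMeasure) := fun j s =>
    mul_le_mul_right (hdom j _) _
  have hfin : ∫⁻ s, F (c • logisticMeasure) s ≠ ⊤ := by
    simp only [F, Measure.smul_apply, smul_eq_mul, mul_left_comm _ c]
    rw [lintegral_const_mul' _ _ hc, lintegral_ofReal_sigmoid_mul_logisticMeasure_Ioi, mul_one]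
    exact hc
  have hlimF := tendsto_lintegral_of_dominated_convergence _ hF_meas
    (fun j => Eventually.of_forall (hbound j)) hfin
    (hlim.mono fun s hs => ENNReal.Tendsto.const_mul hs (Or.inr ENNReal.ofReal_ne_top))
  have hνfin : ∫⁻ s, F ν s ≠ ⊤ :=
    ne_top_of_le_ne_top hfin (le_of_tendsto' hlimF fun j => lintegral_mono (hbound j))
  simp_rw [hF]
  exact (ENNReal.tendsto_toReal hνfin).comp hlimF

/-- If `φ_j, φ` are convex on `ℝ` with `∂²φ_j, ∂²φ` probability measures,
`‖φ_j - φ‖_{L^∞(ℝ)} → 0`, and `∂²φ_j ≤ C·φ₀''·dx` uniformly in `j` (where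
`φ₀(x) = log(1+eˣ)`), then `∫ φ₀ d(∂²φ_j) → ∫ φ₀ d(∂²φ)`. -/
theorem first_moments_converge (φ : ℕ → ℝ → ℝ) (ψ : ℝ → ℝ) (C : ℝ)
    (μ : ℕ → Measure ℝ) (ν : Measure ℝ)
    (hconv : ∀ j, ConvexOn ℝ Set.univ (φ j)) (hψ : ConvexOn ℝ Set.univ ψ)
    (hprob : ∀ j, IsProbabilityMeasure (μ j)) (hνprob : IsProbabilityMeasure ν)
    -- `μ j = ∂²(φ j)` and `ν = ∂²ψ`:
    (hμ : ∀ j, ∀ a b : ℝ, a ≤ b →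
      μ j (Set.Ioc a b) = ENNReal.ofReal
        (derivWithin (φ j) (Set.Ioi b) b - derivWithin (φ j) (Set.Ioi a) a))
    (hν : ∀ a b : ℝ, a ≤ b →
      ν (Set.Ioc a b) = ENNReal.ofReal
        (derivWithin ψ (Set.Ioi b) b - derivWithin ψ (Set.Ioi a) a))
    -- uniform `L^∞` convergence `φ_j → ψ`:
    (hunif : ∀ ε > 0, ∃ N, ∀ j ≥ N, ∀ x, |φ j x - ψ x| ≤ ε)
    -- uniform domination `∂²φ_j ≤ C·φ₀''·dx`:
    (hdom : ∀ j, μ j ≤ volume.withDensity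
      (fun x => ENNReal.ofReal (C * (Real.exp x / (1 + Real.exp x) ^ 2)))) :
    Tendsto (fun j => ∫ x, Real.log (1 + Real.exp x) ∂(μ j)) atTop
      (𝓝 (∫ x, Real.log (1 + Real.exp x) ∂ν)) := by
  have hD : ∀ᵐ x, DifferentiableAt ℝ ψ x := hψ.locallyLipschitz.ae_differentiableAt
  have hpt : ∀ y, Tendsto (fun j => φ j y) atTop (𝓝 (ψ y)) := fun y =>
    Metric.tendsto_atTop.2 fun ε hε => (hunif (ε / 2) (half_pos hε)).imp fun _ hN j hj =>
      (hN j hj y).trans_lt (half_lt_self hε)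
  have hIoc : ∀ a ∈ {x | DifferentiableAt ℝ ψ x}, ∀ b ∈ {x | DifferentiableAt ℝ ψ x}, a ≤ b →
      Tendsto (fun j => μ j (Ioc a b)) atTop (𝓝 (ν (Ioc a b))) := fun a ha b hb hab => by
    simp only [hμ _ a b hab, hν a b hab]
    exact ENNReal.tendsto_ofReal ((ConvexOn.tendsto_rightDeriv_of_tendsto hconv hpt hb).sub
      (ConvexOn.tendsto_rightDeriv_of_tendsto hconv hpt ha))
  refine tendsto_integral_log_one_add_exp ENNReal.ofReal_ne_top
    (fun j => (hdom j).trans_eq (withDensity_ofReal_mul_exp_div_one_add_exp_sq C)) ?_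
  filter_upwards [hD] with s hs
  exact tendsto_measure_Ioi_of_tendsto_measure_Ioc (frequently_atTop_of_ae hD)
    (frequently_atBot_of_ae hD) hIoc hs
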